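/- Let S be a Boolean inverse semigroup and μ its largest idempotent-separating congruence (s μ t iff s e s* = t e t* for all idempotents e). Then μ is compatible with skew difference and skew addition; consequently S/μ is a Boolean inverse semigroup and the projection S → S/μ is additive. -/

import Mathlib

/-- An inverse semigroup with zero. -/
class InverseSemigroup0 (S : Type*) extends Semigroup S, Zero S, Star S where
  zero_mul : ∀ s : S, 0 * s = 0
  mul_zero : ∀ s : S, s * 0 = 0
  mul_star_mul_self : ∀ s : S, s * star s * s = s
  star_mul_self_star : ∀ s : S, star s * s * star s = star s
  star_unique : ∀ s t : S, s * t * s = s → t * s * t = t → t = star s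

/-- The natural partial order on an inverse semigroup. -/
def NatLe {S : Type*} [InverseSemigroup0 S] (a b : S) : Prop := a = b * star a * a

/-- Two elements are compatible if `s t*` and `s* t` are idempotent. -/
def Compat {S : Type*} [InverseSemigroup0 S] (s t : S) : Prop :=
  IsIdempotentElem (s * star t) ∧ IsIdempotentElem (star s * t)

/-- A Boolean inverse semigroup: an inverse semigroup with zero whose idempotents form
a (generalized) Boolean algebra (witnessed by the relative complement `\`), possessing
joins of compatible pairs over which multiplication distributes. -/
class BooleanInverseSemigroup0 (S : Type*) extends InverseSemigroup0 S, Max S, SDiff S where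
  le_sup_left : ∀ s t : S, Compat s t → NatLe s (s ⊔ t)
  le_sup_right : ∀ s t : S, Compat s t → NatLe t (s ⊔ t)
  sup_le : ∀ s t u : S, Compat s t → NatLe s u → NatLe t u → NatLe (s ⊔ t) u
  mul_sup : ∀ a s t : S, Compat s t → a * (s ⊔ t) = (a * s) ⊔ (a * t)
  sup_mul : ∀ a s t : S, Compat s t → (s ⊔ t) * a = (s * a) ⊔ (t * a)
  sdiff_idem : ∀ e f : S, IsIdempotentElem e → IsIdempotentElem f → IsIdempotentElem (e \ f)
  sdiff_le : ∀ e f : S, IsIdempotentElem e → IsIdempotentElem f → NatLe (e \ f) e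
  sdiff_mul : ∀ e f : S, IsIdempotentElem e → IsIdempotentElem f → (e \ f) * f = 0
  sdiff_sup : ∀ e f : S, IsIdempotentElem e → IsIdempotentElem f → (e \ f) ⊔ (e * f) = e

variable {S : Type*} [BooleanInverseSemigroup0 S]

/-- The skew difference `s ⊖ t = (s s* \ t t*) s (s* s \ t* t)`. -/
def skewDiff (s t : S) : S :=
  ((s * star s) \ (t * star t)) * s * ((star s * s) \ (star t * t))

/-- The skew addition `s ▽ t = (s ⊖ t) ∨ t`. -/
def skewAdd (s t : S) : S := skewDiff s t ⊔ t

/-- The maximal idempotent-separating congruence `μ`: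
`s μ t` iff `s e s* = t e t*` for all idempotents `e`. -/
def muRel (s t : S) : Prop :=
  ∀ e : S, IsIdempotentElem e → s * e * star s = t * e * star t

/-- `π : S → Q` is an additive projection: zero- and multiplication-preserving, and
preserving joins of compatible pairs. -/
def IsAdditiveProj {S Q : Type*} [BooleanInverseSemigroup0 S] [BooleanInverseSemigroup0 Q]
    (π : S → Q) : Prop :=
  π 0 = 0 ∧ (∀ a b : S, π (a * b) = π a * π b) ∧
    ∀ a b : S, Compat a b → π (a ⊔ b) = π a ⊔ π b

/-!
Two `μ`-related elements have the same range `s s*` and domain `s* s` (conjugate the range and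
domain idempotents), and `μ` separates idempotents, each of which is its own range. Hence `μ`
fixes the idempotent factors of `s ⊖ t`, and is compatible with `⊖`. For a compatible pair,
`(s ∨ t) c (s ∨ t)*` splits into four terms; the cross term is `s c t* = (s (t* t) c s*) (s t*)`,
whose second factor is an idempotent and therefore determined by the classes. This gives
compatibility with joins, hence with `s ▽ t = (s ⊖ t) ∨ t`, which equals `s ∨ t` when `s`, `t`
are compatible.

In `S/μ` a class `[s]` is idempotent iff `s μ s s*`: from `s² μ s` one gets `s* s = s s*`, and
conjugation by `s` is then an idempotent automorphism of the idempotents below `s s*`, so it is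
the identity there. Thus idempotents of `S/μ` commute, inverses are unique, and relative
complements are inherited from `S`. If `[s]` and `[u]` are compatible, then
`u = u (u* u \ s* s) ∨ u (s* s) μ u (u* u \ s* s) ∨ s (u* u)`, and the right-hand side is
compatible with `s`; so every join in `S/μ` is the image of a join in `S`, with `▽` inducing it.
-/

theorem inverse_unique_of_idempotents_commute {M : Type*} [Semigroup M]
    (hcomm : ∀ e f : M, IsIdempotentElem e → IsIdempotentElem f → e * f = f * e) {x y z : M}
    (hy₁ : x * y * x = x) (hy₂ : y * x * y = y) (hz₁ : x * z * x = x)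
    (hz₂ : z * x * z = z) : y = z := by
  have idem : ∀ {a b : M}, a * b * a = a →
      IsIdempotentElem (a * b) ∧ IsIdempotentElem (b * a) := by
    intro a b h
    exact ⟨by rw [IsIdempotentElem, ← mul_assoc, h],
      by rw [IsIdempotentElem, mul_assoc b a, ← mul_assoc a b a, h]⟩
  have hz : z = z * x * y := by
    calc z = z * (x * y * x) * z := by rw [hy₁, hz₂]
      _ = z * (x * y * (x * z)) := by simp only [mul_assoc]
      _ = z * (x * z * (x * y)) := by rw [hcomm _ _ (idem hy₁).1 (idem hz₁).1]
      _ = z * x * y := by simp only [← mul_assoc, hz₂]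
  calc y = y * x * y := hy₂.symm
    _ = y * x * (z * x) * y := by rw [mul_assoc y x (z * x), ← mul_assoc x z x, hz₁]
    _ = z * x * (y * x) * y := by rw [hcomm _ _ (idem hy₁).2 (idem hz₁).2]
    _ = z := by rw [mul_assoc (z * x), hy₂, ← hz]

namespace InverseSemigroup0

section Basic

variable {T : Type*} [InverseSemigroup0 T]

theorem mul_star_mul_self' (s : T) : s * (star s * s) = s := by
  rw [← mul_assoc, mul_star_mul_self]

theorem mul_star_mul_self_mul (s x : T) : s * (star s * (s * x)) = s * x := by
  rw [← mul_assoc, ← mul_assoc, mul_star_mul_self]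

theorem star_mul_self_star' (s : T) : star s * (s * star s) = star s := by
  rw [← mul_assoc, star_mul_self_star]

theorem star_mul_self_star_mul (s x : T) : star s * (s * (star s * x)) = star s * x := by
  rw [← mul_assoc, ← mul_assoc, star_mul_self_star]

theorem star_star (s : T) : star (star s) = s :=
  (star_unique _ _ (star_mul_self_star s) (mul_star_mul_self s)).symm

theorem isIdempotentElem_star_mul_self (s : T) : IsIdempotentElem (star s * s) := by
  rw [IsIdempotentElem, mul_assoc, mul_star_mul_self']

theorem isIdempotentElem_mul_star_self (s : T) : IsIdempotentElem (s * star s) := by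
  rw [IsIdempotentElem, mul_assoc, star_mul_self_star']

theorem _root_.IsIdempotentElem.star_eq_self {e : T} (he : IsIdempotentElem e) : star e = e := by
  have h : e * e * e = e := by rw [he.eq, he.eq]
  exact (star_unique e e h h).symm

theorem isIdempotentElem_zero : IsIdempotentElem (0 : T) := zero_mul 0

theorem star_zero : star (0 : T) = 0 := isIdempotentElem_zero.star_eq_self

theorem isIdempotentElem_mul {e f : T} (he : IsIdempotentElem e) (hf : IsIdempotentElem f) :
    IsIdempotentElem (e * f) := by
  obtain ⟨x, hx⟩ : ∃ x, star (e * f) = x := ⟨_, rfl⟩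
  have h₁ : e * f * x * (e * f) = e * f := hx ▸ mul_star_mul_self _
  have h₂ : x * (e * f) * x = x := hx ▸ star_mul_self_star _
  -- `f x e` is a second inverse of `e f`, hence equals `x`, and it is visibly idempotent.
  have hfxe : f * x * e = x := by
    refine (star_unique _ _ ?_ ?_).trans hx
    · calc e * f * (f * x * e) * (e * f) = e * f * x * (e * f) := by
            simp only [mul_assoc, hf.mul_self_mul, he.mul_self_mul]
        _ = e * f := h₁
    · calc f * x * e * (e * f) * (f * x * e) = f * (x * (e * f) * x) * e := by
            simp only [mul_assoc, hf.mul_self_mul, he.mul_self_mul]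
        _ = f * x * e := by rw [h₂, mul_assoc]
  have hxx : IsIdempotentElem x := by
    calc x * x = f * x * e * (f * x * e) := by rw [hfxe]
      _ = f * (x * (e * f) * x) * e := by simp only [mul_assoc]
      _ = x := by rw [h₂, hfxe]
  rw [← star_star (e * f), hx, hxx.star_eq_self]
  exact hxx

theorem mul_comm_of_isIdempotentElem {e f : T} (he : IsIdempotentElem e)
    (hf : IsIdempotentElem f) : e * f = f * e := by
  have hef := isIdempotentElem_mul he hf
  have hfe := isIdempotentElem_mul hf he
  have h : f * e = star (e * f) := by
    refine star_unique _ _ ?_ ?_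
    · calc e * f * (f * e) * (e * f) = e * f * (e * f) := by
            simp only [mul_assoc, hf.mul_self_mul, he.mul_self_mul]
        _ = e * f := hef.eq
    · calc f * e * (e * f) * (f * e) = f * e * (f * e) := by
            simp only [mul_assoc, hf.mul_self_mul, he.mul_self_mul]
        _ = f * e := hfe.eq
  rw [h, hef.star_eq_self]

theorem star_mul (a b : T) : star (a * b) = star b * star a := by
  have hcomm := mul_comm_of_isIdempotentElem (isIdempotentElem_mul_star_self b)
    (isIdempotentElem_star_mul_self a)
  refine (star_unique _ _ ?_ ?_).symm
  · calc a * b * (star b * star a) * (a * b) = a * (b * star b * (star a * a)) * b := by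
          simp only [mul_assoc]
      _ = a * b := by rw [hcomm]; simp only [mul_assoc, mul_star_mul_self', mul_star_mul_self_mul]
  · calc star b * star a * (a * b) * (star b * star a)
          = star b * (star a * a * (b * star b)) * star a := by simp only [mul_assoc]
      _ = star b * star a := by
          rw [← hcomm]; simp only [mul_assoc, star_mul_self_star', star_mul_self_star_mul]

end Basic

section Order

variable {T : Type*} [InverseSemigroup0 T]

theorem isIdempotentElem_conj {x : T} (hx : IsIdempotentElem x) (a : T) :
    IsIdempotentElem (a * x * star a) := by
  calc a * x * star a * (a * x * star a) = a * (star a * a * x * x) * star a := by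
        rw [mul_comm_of_isIdempotentElem (isIdempotentElem_star_mul_self a) hx]
        simp only [mul_assoc]
    _ = a * x * star a := by simp only [hx.mul_mul_self, mul_assoc, mul_star_mul_self_mul]

theorem isIdempotentElem_star_conj {x : T} (hx : IsIdempotentElem x) (a : T) :
    IsIdempotentElem (star a * x * a) := by
  simpa only [star_star] using isIdempotentElem_conj hx (star a)

theorem mul_mul_self_of_isIdempotentElem {p q : T} (hp : IsIdempotentElem p)
    (hq : IsIdempotentElem q) : p * q * p = p * q := by
  rw [mul_assoc, mul_comm_of_isIdempotentElem hq hp, hp.mul_self_mul]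

theorem eq_of_mul_eq_of_mul_eq {p q : T} (hp : IsIdempotentElem p) (hq : IsIdempotentElem q)
    (h₁ : p * q = p) (h₂ : q * p = q) : p = q := by
  rw [← h₁, mul_comm_of_isIdempotentElem hp hq, h₂]

theorem mul_mul_star_eq {c : T} (s t : T) (hc : IsIdempotentElem c) :
    s * c * star t = s * (star t * t * c) * star s * (s * star t) := by
  have ht := isIdempotentElem_star_mul_self t
  rw [mul_comm_of_isIdempotentElem ht hc]
  calc s * c * star t = s * (star s * s * (c * (star t * t))) * star t := by
        simp only [mul_assoc, mul_star_mul_self_mul, star_mul_self_star']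
    _ = s * (c * (star t * t)) * star s * (s * star t) := by
        rw [mul_comm_of_isIdempotentElem (isIdempotentElem_star_mul_self s)
          (isIdempotentElem_mul hc ht)]
        simp only [mul_assoc]

theorem natLe_refl (a : T) : NatLe a a := (mul_star_mul_self a).symm

theorem natLe_mul_right (b : T) {f : T} (hf : IsIdempotentElem f) : NatLe (b * f) b := by
  rw [NatLe, star_mul, hf.star_eq_self]
  calc b * f = b * (star b * b * f) * f := by
        simp only [← mul_assoc, mul_star_mul_self, hf.mul_mul_self]
    _ = b * (f * star b) * (b * f) := by
        rw [mul_comm_of_isIdempotentElem (isIdempotentElem_star_mul_self b) hf]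
        simp only [mul_assoc]

theorem natLe_mul_left {e : T} (he : IsIdempotentElem e) (b : T) : NatLe (e * b) b := by
  rw [NatLe, star_mul, he.star_eq_self]
  calc e * b = e * (b * star b) * b := by rw [mul_assoc e, mul_star_mul_self]
    _ = b * (star b * e) * (e * b) := by
        rw [mul_comm_of_isIdempotentElem he (isIdempotentElem_mul_star_self b)]
        simp only [mul_assoc, he.mul_self_mul]

theorem zero_natLe (a : T) : NatLe 0 a := by
  simpa only [zero_mul] using natLe_mul_left isIdempotentElem_zero a

variable {a b c : T}

theorem _root_.NatLe.eq_mul_star_mul (h : NatLe a b) : a = b * (star a * a) :=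
  h.trans (mul_assoc _ _ _)

theorem _root_.NatLe.star_eq (h : NatLe a b) : star a = star a * a * star b := by
  conv_lhs => rw [h]
  rw [star_mul, star_mul, star_star, mul_assoc]

theorem _root_.NatLe.mul_star_eq (h : NatLe a b) : a * star b = a * star a := by
  conv_rhs => rw [h.star_eq]
  rw [← mul_assoc, ← mul_assoc, mul_star_mul_self]

theorem _root_.NatLe.eq_mul_star_self_mul (h : NatLe a b) : a = a * star a * b := by
  symm
  calc a * star a * b = a * (star b * b) := by rw [← h.mul_star_eq, mul_assoc]
    _ = b * (star a * a) * (star b * b) := by rw [← h.eq_mul_star_mul]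
    _ = b * (star b * b) * (star a * a) := by
        rw [mul_assoc, mul_comm_of_isIdempotentElem (isIdempotentElem_star_mul_self a)
          (isIdempotentElem_star_mul_self b), ← mul_assoc]
    _ = a := by rw [mul_star_mul_self', ← h.eq_mul_star_mul]

theorem natLe_star (h : NatLe a b) : NatLe (star a) (star b) := by
  have := natLe_mul_right (star b) (isIdempotentElem_mul_star_self a)
  rwa [← (isIdempotentElem_mul_star_self a).star_eq_self, ← star_mul,
    ← h.eq_mul_star_self_mul] at this

theorem _root_.NatLe.trans (h₁ : NatLe a b) (h₂ : NatLe b c) : NatLe a c := by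
  have := natLe_mul_left (isIdempotentElem_mul (isIdempotentElem_mul_star_self a)
    (isIdempotentElem_mul_star_self b)) c
  rwa [mul_assoc, ← h₂.eq_mul_star_self_mul, ← h₁.eq_mul_star_self_mul] at this

theorem _root_.NatLe.antisymm (h₁ : NatLe a b) (h₂ : NatLe b a) : a = b := by
  have h : a * star a = b * star b := by
    rw [← h₁.mul_star_eq, ← (isIdempotentElem_mul_star_self b).star_eq_self,
      ← h₂.mul_star_eq, star_mul, star_star]
  calc a = a * star a * b := h₁.eq_mul_star_self_mul
    _ = b := by rw [h, mul_star_mul_self]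

end Order

section Compat

variable {T : Type*} [InverseSemigroup0 T] {a b c d s t : T}

theorem star_mul_star (x y : T) : star (x * star y) = y * star x := by
  rw [star_mul, star_star]

theorem star_star_mul (x y : T) : star (star x * y) = star y * x := by
  rw [star_mul, star_star]

theorem _root_.Compat.symm (h : Compat s t) : Compat t s :=
  ⟨by rw [← star_mul_star, h.1.star_eq_self]; exact h.1,
    by rw [← star_star_mul, h.2.star_eq_self]; exact h.2⟩

theorem compat_star (h : Compat s t) : Compat (star s) (star t) := by
  rw [Compat, star_star, star_star]
  exact ⟨h.2, h.1⟩

theorem compat_of_isIdempotentElem (hs : IsIdempotentElem s) (ht : IsIdempotentElem t) :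
    Compat s t := by
  rw [Compat, hs.star_eq_self, ht.star_eq_self]
  exact ⟨isIdempotentElem_mul hs ht, isIdempotentElem_mul hs ht⟩

theorem compat_of_mul_star_eq_zero (h₁ : s * star t = 0) (h₂ : star s * t = 0) :
    Compat s t := by
  rw [Compat, h₁, h₂]
  exact ⟨isIdempotentElem_zero, isIdempotentElem_zero⟩

theorem _root_.Compat.mono_left (h : Compat b d) (hab : NatLe a b) : Compat a d := by
  constructor
  · have e : a * star d = a * star a * (b * star d) := by
      nth_rw 1 [hab.eq_mul_star_self_mul]
      rw [mul_assoc _ b]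
    rw [e]
    exact isIdempotentElem_mul (isIdempotentElem_mul_star_self a) h.1
  · have e : star a * d = star a * a * (star b * d) := by
      nth_rw 1 [hab.star_eq]
      rw [mul_assoc _ (star b)]
    rw [e]
    exact isIdempotentElem_mul (isIdempotentElem_star_mul_self a) h.2

theorem _root_.Compat.mono (h : Compat b d) (hab : NatLe a b) (hcd : NatLe c d) :
    Compat a c :=
  ((h.mono_left hab).symm.mono_left hcd).symm

theorem compat_refl (s : T) : Compat s s :=
  ⟨isIdempotentElem_mul_star_self s, isIdempotentElem_star_mul_self s⟩

theorem compat_of_natLe (h : NatLe a b) : Compat a b :=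
  (compat_refl b).mono_left h

theorem _root_.Compat.mul_star_self_mul (h : Compat s t) : t * star t * s = s * star t * t := by
  rw [← h.1.star_eq_self, star_mul_star, mul_assoc, mul_assoc, ← star_star_mul,
    h.2.star_eq_self]

theorem _root_.Compat.mul_right (h : Compat s t) (a : T) : Compat (s * a) (t * a) := by
  constructor
  · have e : s * a * star (t * a) = s * star t * (t * (a * star a) * star t) := by
      calc s * a * star (t * a) = s * ((a * star a) * (star t * t)) * star t := by
            simp only [star_mul, mul_assoc, star_mul_self_star']
        _ = s * star t * (t * (a * star a) * star t) := by
            rw [← mul_comm_of_isIdempotentElem (isIdempotentElem_star_mul_self t)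
              (isIdempotentElem_mul_star_self a)]
            simp only [mul_assoc]
    rw [e]
    exact isIdempotentElem_mul h.1 (isIdempotentElem_conj (isIdempotentElem_mul_star_self a) t)
  · have e : star (s * a) * (t * a) = star a * (star s * t) * a := by
      simp only [star_mul, mul_assoc]
    rw [e]
    exact isIdempotentElem_star_conj h.2 a

theorem _root_.Compat.mul_left (h : Compat s t) (a : T) : Compat (a * s) (a * t) := by
  simpa only [star_mul, star_star] using (compat_star h).mul_right (star a) |> compat_star

end Compat

section Boolean

variable {T : Type*} [BooleanInverseSemigroup0 T] {a b c d e f s t x y : T}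

open BooleanInverseSemigroup0 (le_sup_left le_sup_right sup_le mul_sup sup_mul sdiff_idem
  sdiff_le sdiff_mul sdiff_sup)

theorem sup_eq_right_of_natLe (h : NatLe a b) : a ⊔ b = b :=
  (sup_le a b b (compat_of_natLe h) h (natLe_refl b)).antisymm
    (le_sup_right a b (compat_of_natLe h))

theorem sup_eq_left_of_natLe (h : NatLe b a) : a ⊔ b = a :=
  (sup_le a b a (compat_of_natLe h).symm (natLe_refl a) h).antisymm
    (le_sup_left a b (compat_of_natLe h).symm)

theorem sup_zero (a : T) : a ⊔ 0 = a := sup_eq_left_of_natLe (zero_natLe a)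

theorem sup_natLe_sup (h : Compat c d) (hac : NatLe a c) (hbd : NatLe b d) :
    NatLe (a ⊔ b) (c ⊔ d) :=
  sup_le a b _ (h.mono hac hbd) (hac.trans (le_sup_left c d h)) (hbd.trans (le_sup_right c d h))

theorem isIdempotentElem_sup (he : IsIdempotentElem e) (hf : IsIdempotentElem f) :
    IsIdempotentElem (e ⊔ f) := by
  have hc := compat_of_isIdempotentElem he hf
  rw [IsIdempotentElem, sup_mul _ e f hc, mul_sup e e f hc, mul_sup f e f hc, he.eq, hf.eq,
    sup_eq_left_of_natLe (natLe_mul_right e hf), sup_eq_right_of_natLe (natLe_mul_right f he)]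

theorem star_sup (h : Compat s t) : star (s ⊔ t) = star s ⊔ star t := by
  have hs := natLe_star (le_sup_left _ _ (compat_star h))
  have ht := natLe_star (le_sup_right _ _ (compat_star h))
  rw [star_star] at hs ht
  refine NatLe.antisymm ?_ ?_
  · simpa only [star_star] using natLe_star (sup_le s t _ h hs ht)
  · exact sup_le _ _ _ (compat_star h) (natLe_star (le_sup_left s t h))
      (natLe_star (le_sup_right s t h))

theorem compat_sup (hxy : Compat x y) (hx : Compat s x) (hy : Compat s y) :
    Compat s (x ⊔ y) := by
  constructor
  · rw [star_sup hxy, mul_sup s _ _ (compat_star hxy)]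
    exact isIdempotentElem_sup hx.1 hy.1
  · rw [mul_sup _ x y hxy]
    exact isIdempotentElem_sup hx.2 hy.2

theorem sup_mul_mul_star_sup (h : Compat s t) (c : T) :
    (s ⊔ t) * c * star (s ⊔ t) =
      (s * c * star s ⊔ s * c * star t) ⊔ (t * c * star s ⊔ t * c * star t) := by
  rw [star_sup h, sup_mul c s t h, sup_mul _ _ _ (h.mul_right c),
    mul_sup (s * c) _ _ (compat_star h), mul_sup (t * c) _ _ (compat_star h)]

theorem mul_sdiff_sup_mul (x : T) (he : IsIdempotentElem e) (hf : IsIdempotentElem f) :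
    x * (e \ f) ⊔ x * (e * f) = x * e := by
  rw [← mul_sup x _ _ (compat_of_isIdempotentElem (sdiff_idem e f he hf)
    (isIdempotentElem_mul he hf)), sdiff_sup e f he hf]

theorem sdiff_mul_sup_mul (x : T) (he : IsIdempotentElem e) (hf : IsIdempotentElem f) :
    (e \ f) * x ⊔ (e * f) * x = e * x := by
  rw [← sup_mul x _ _ (compat_of_isIdempotentElem (sdiff_idem e f he hf)
    (isIdempotentElem_mul he hf)), sdiff_sup e f he hf]

theorem mul_sdiff_self_right (he : IsIdempotentElem e) (hf : IsIdempotentElem f) :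
    f * (e \ f) = 0 := by
  rw [mul_comm_of_isIdempotentElem hf (sdiff_idem e f he hf), sdiff_mul e f he hf]

theorem mul_star_eq_zero_of_mul_star_mul_self (h : x * (star t * t) = 0) : x * star t = 0 := by
  rw [← star_mul_self_star t, ← mul_assoc, ← mul_assoc, mul_assoc x, h, zero_mul]

theorem mul_eq_zero_of_mul_mul_star_self (h : x * (t * star t) = 0) : x * t = 0 := by
  rw [← mul_star_mul_self t, ← mul_assoc, ← mul_assoc, mul_assoc x, h, zero_mul]

theorem skewDiff_mul_star (s t : T) : skewDiff s t * star t = 0 := by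
  have hF := sdiff_mul _ _ (isIdempotentElem_star_mul_self s) (isIdempotentElem_star_mul_self t)
  rw [skewDiff, mul_assoc, mul_star_eq_zero_of_mul_star_mul_self hF, mul_zero]

theorem star_skewDiff_mul (s t : T) : star (skewDiff s t) * t = 0 := by
  have hs := isIdempotentElem_mul_star_self s
  have ht := isIdempotentElem_mul_star_self t
  have hs' := isIdempotentElem_star_mul_self s
  have ht' := isIdempotentElem_star_mul_self t
  rw [skewDiff, star_mul, star_mul, (sdiff_idem _ _ hs' ht').star_eq_self,
    (sdiff_idem _ _ hs ht).star_eq_self, mul_assoc, mul_assoc,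
    mul_eq_zero_of_mul_mul_star_self (sdiff_mul _ _ hs ht), mul_zero, mul_zero]

theorem compat_skewDiff (s t : T) : Compat (skewDiff s t) t :=
  compat_of_mul_star_eq_zero (skewDiff_mul_star s t) (star_skewDiff_mul s t)

theorem skewDiff_natLe (s t : T) : NatLe (skewDiff s t) s :=
  (natLe_mul_right _ (sdiff_idem _ _ (isIdempotentElem_star_mul_self s)
    (isIdempotentElem_star_mul_self t))).trans
    (natLe_mul_left (sdiff_idem _ _ (isIdempotentElem_mul_star_self s)
      (isIdempotentElem_mul_star_self t)) s)

theorem _root_.Compat.skewDiff_eq (h : Compat s t) :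
    skewDiff s t = s * ((star s * s) \ (star t * t)) := by
  have hss := isIdempotentElem_mul_star_self s
  have htt := isIdempotentElem_mul_star_self t
  have h₀ : t * star t * (s * ((star s * s) \ (star t * t))) = 0 := by
    calc t * star t * (s * ((star s * s) \ (star t * t)))
        = s * (star t * t * ((star s * s) \ (star t * t))) := by
          rw [← mul_assoc, h.mul_star_self_mul]; simp only [mul_assoc]
      _ = 0 := by
          rw [mul_sdiff_self_right (isIdempotentElem_star_mul_self s)
            (isIdempotentElem_star_mul_self t), mul_zero]
  calc skewDiff s t = (s * star s) \ (t * star t) * (s * ((star s * s) \ (star t * t))) ⊔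
        s * star s * (t * star t) * (s * ((star s * s) \ (star t * t))) := by
        rw [mul_assoc (s * star s), h₀, mul_zero, sup_zero, skewDiff, mul_assoc]
    _ = s * ((star s * s) \ (star t * t)) := by
        rw [sdiff_mul_sup_mul _ hss htt, mul_assoc, mul_star_mul_self_mul]

theorem _root_.Compat.skewAdd_eq (h : Compat s t) : skewAdd s t = s ⊔ t := by
  have hc := compat_skewDiff s t
  refine (sup_le _ _ _ hc ((skewDiff_natLe s t).trans (le_sup_left s t h))
    (le_sup_right s t h)).antisymm (sup_le s t _ h ?_ (le_sup_right _ _ hc))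
  have hdec := mul_sdiff_sup_mul s (isIdempotentElem_star_mul_self s)
    (isIdempotentElem_star_mul_self t)
  rw [← mul_assoc, mul_star_mul_self', ← h.skewDiff_eq, ← mul_assoc] at hdec
  nth_rw 1 [← hdec]
  exact sup_natLe_sup hc (natLe_refl _) (natLe_mul_left h.1 t)

end Boolean

section Mu

variable {T : Type*} [BooleanInverseSemigroup0 T] {a b c d s t u : T}

theorem muRel_refl (s : T) : muRel s s := fun _ _ => rfl

theorem _root_.muRel.symm (h : muRel s t) : muRel t s := fun e he => (h e he).symm

theorem _root_.muRel.trans (h₁ : muRel s t) (h₂ : muRel t u) : muRel s u :=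
  fun e he => (h₁ e he).trans (h₂ e he)

theorem muRel_equivalence : Equivalence (muRel (S := T)) :=
  ⟨muRel_refl, muRel.symm, muRel.trans⟩

theorem _root_.muRel.mul_left (h : muRel s t) (a : T) : muRel (a * s) (a * t) := by
  intro e he
  calc a * s * e * star (a * s) = a * (s * e * star s) * star a := by
        simp only [star_mul, mul_assoc]
    _ = a * t * e * star (a * t) := by rw [h e he]; simp only [star_mul, mul_assoc]

theorem _root_.muRel.mul_right (h : muRel s t) (a : T) : muRel (s * a) (t * a) := by
  intro e he
  calc s * a * e * star (s * a) = s * (a * e * star a) * star s := by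
        simp only [star_mul, mul_assoc]
    _ = t * a * e * star (t * a) := by
        rw [h _ (isIdempotentElem_conj he a)]; simp only [star_mul, mul_assoc]

theorem _root_.muRel.mul (h₁ : muRel a b) (h₂ : muRel c d) : muRel (a * c) (b * d) :=
  (h₁.mul_right c).trans (h₂.mul_left b)

theorem _root_.muRel.mul_star_self_eq (h : muRel s t) : s * star s = t * star t := by
  have key : ∀ {s t : T}, muRel s t → s * star s * (t * star t) = s * star s := by
    intro s t h
    have h' : s * star s = t * (star s * s) * star t := by
      rw [← h _ (isIdempotentElem_star_mul_self s), mul_star_mul_self']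
    rw [h']
    simp only [mul_assoc, star_mul_self_star']
  exact eq_of_mul_eq_of_mul_eq (isIdempotentElem_mul_star_self s)
    (isIdempotentElem_mul_star_self t) (key h) (key h.symm)

theorem _root_.muRel.star_mul_self_eq (h : muRel s t) : star s * s = star t * t := by
  have key : ∀ {s t : T}, muRel s t → star s * s * (star t * t) = star s * s := by
    intro s t h
    rw [← mul_mul_self_of_isIdempotentElem (isIdempotentElem_star_mul_self s)
      (isIdempotentElem_star_mul_self t)]
    calc star s * s * (star t * t) * (star s * s) = star s * (s * (star t * t) * star s) * s := by
          simp only [mul_assoc]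
      _ = star s * s := by
          rw [h _ (isIdempotentElem_star_mul_self t), mul_star_mul_self', ← h.mul_star_self_eq]
          simp only [mul_assoc, mul_star_mul_self']
  exact eq_of_mul_eq_of_mul_eq (isIdempotentElem_star_mul_self s)
    (isIdempotentElem_star_mul_self t) (key h) (key h.symm)

theorem muRel_star (h : muRel s t) : muRel (star s) (star t) := by
  intro f hf
  rw [star_star, star_star]
  have hs : s * (star s * f * s) * star s = s * star s * f * (s * star s) := by
    simp only [mul_assoc]
  have ht : t * (star t * f * t) * star t = t * star t * f * (t * star t) := by
    simp only [mul_assoc]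
  have hst : s * (star s * f * s) * star s = s * (star t * f * t) * star s := by
    rw [hs, h.mul_star_self_eq, ← ht, h _ (isIdempotentElem_star_conj hf t)]
  calc star s * f * s = star s * (s * (star s * f * s) * star s) * s := by
        simp only [mul_assoc, star_mul_self_star_mul, mul_star_mul_self']
    _ = star t * t * (star t * f * t) * (star t * t) := by
        rw [hst, ← h.star_mul_self_eq]; simp only [mul_assoc]
    _ = star t * f * t := by simp only [mul_assoc, star_mul_self_star_mul, mul_star_mul_self']

theorem _root_.muRel.eq_of_isIdempotentElem {e f : T} (h : muRel e f) (he : IsIdempotentElem e)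
    (hf : IsIdempotentElem f) : e = f := by
  simpa only [he.star_eq_self, he.eq, hf.star_eq_self, hf.eq] using h.mul_star_self_eq

theorem star_mul_self_eq_mul_star_self_of_muRel (h : muRel (s * s) s) :
    star s * s = s * star s := by
  have hp := isIdempotentElem_star_mul_self s
  have hq := isIdempotentElem_mul_star_self s
  have hdom : star s * (star s * s) * s = star s * s := by
    simpa only [star_mul, mul_assoc] using h.star_mul_self_eq
  have hran : s * (s * star s) * star s = s * star s := by
    simpa only [star_mul, mul_assoc] using h.mul_star_self_eq
  refine eq_of_mul_eq_of_mul_eq hp hq ?_ ?_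
  · rw [← mul_mul_self_of_isIdempotentElem hp hq]
    calc star s * s * (s * star s) * (star s * s) = star s * (s * (s * star s) * star s) * s := by
          simp only [mul_assoc]
      _ = star s * s := by rw [hran, star_mul_self_star']
  · rw [← mul_mul_self_of_isIdempotentElem hq hp]
    calc s * star s * (star s * s) * (s * star s) = s * (star s * (star s * s) * s) * star s := by
          simp only [mul_assoc]
      _ = s * star s := by rw [hdom, mul_star_mul_self']

theorem muRel_mul_star_self_of_mul_self (h : muRel (s * s) s) : muRel s (s * star s) := by
  have hpq := star_mul_self_eq_mul_star_self_of_muRel h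
  intro e he
  have hx : s * (s * e * star s) * star s = s * e * star s := by
    simpa only [star_mul, mul_assoc] using h e he
  calc s * e * star s = star s * s * (s * e * star s) * (star s * s) := by
        rw [hpq]; simp only [mul_assoc, mul_star_mul_self_mul, star_mul_self_star']
    _ = star s * (s * (s * e * star s) * star s) * s := by simp only [mul_assoc]
    _ = star s * (s * e * star s) * s := by rw [hx]
    _ = s * star s * e * star (s * star s) := by
        rw [star_mul, star_star, ← hpq]; simp only [mul_assoc]

section

variable {s₁ s₂ t₁ t₂ : T}

theorem mul_mul_star_eq_of_muRel (hs : muRel s₁ s₂) (ht : muRel t₁ t₂) (h₁ : Compat s₁ t₁)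
    (h₂ : Compat s₂ t₂) {c : T} (hc : IsIdempotentElem c) :
    s₁ * c * star t₁ = s₂ * c * star t₂ := by
  rw [mul_mul_star_eq s₁ t₁ hc, mul_mul_star_eq s₂ t₂ hc, ht.star_mul_self_eq,
    hs _ (isIdempotentElem_mul (isIdempotentElem_star_mul_self t₂) hc),
    (hs.mul (muRel_star ht)).eq_of_isIdempotentElem h₁.1 h₂.1]

theorem muRel_sup (hs : muRel s₁ s₂) (ht : muRel t₁ t₂) (h₁ : Compat s₁ t₁)
    (h₂ : Compat s₂ t₂) : muRel (s₁ ⊔ t₁) (s₂ ⊔ t₂) := by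
  intro c hc
  rw [sup_mul_mul_star_sup h₁, sup_mul_mul_star_sup h₂, hs c hc, ht c hc,
    mul_mul_star_eq_of_muRel hs ht h₁ h₂ hc,
    mul_mul_star_eq_of_muRel ht hs h₁.symm h₂.symm hc]

theorem muRel_skewDiff (hs : muRel s₁ s₂) (ht : muRel t₁ t₂) :
    muRel (skewDiff s₁ t₁) (skewDiff s₂ t₂) := by
  unfold skewDiff
  rw [hs.mul_star_self_eq, ht.mul_star_self_eq, hs.star_mul_self_eq, ht.star_mul_self_eq]
  exact (hs.mul_left _).mul_right _

theorem muRel_skewAdd (hs : muRel s₁ s₂) (ht : muRel t₁ t₂) :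
    muRel (skewAdd s₁ t₁) (skewAdd s₂ t₂) :=
  muRel_sup (muRel_skewDiff hs ht) ht (compat_skewDiff s₁ t₁) (compat_skewDiff s₂ t₂)

end

end Mu

section CompatRepresentative

variable {T : Type*} [BooleanInverseSemigroup0 T] {s u : T}

open BooleanInverseSemigroup0 (sdiff_idem sdiff_mul)

theorem muRel_mul_star_mul_self_swap (ha : muRel (s * star u * (s * star u)) (s * star u)) :
    muRel (u * (star s * s)) (s * (star u * u)) := by
  have hd := star_mul_self_eq_mul_star_self_of_muRel ha
  have e : u * (star s * s) = s * star u * star (s * star u) * u := by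
    rw [← hd, star_mul_star]
    calc u * (star s * s) = u * (star u * u * (star s * s)) := by
          rw [← mul_assoc u (star u * u), mul_star_mul_self']
      _ = u * star s * (s * star u) * u := by
          rw [mul_comm_of_isIdempotentElem (isIdempotentElem_star_mul_self u)
            (isIdempotentElem_star_mul_self s)]
          simp only [mul_assoc]
  rw [e, ← mul_assoc s (star u) u]
  exact ((muRel_mul_star_self_of_mul_self ha).mul_right u).symm

theorem mul_sdiff_star_mul_self_eq_zero (s : T) {e : T} (he : IsIdempotentElem e) :
    s * (e \ (star s * s)) = 0 := by
  calc s * (e \ (star s * s)) = s * (star s * s) * (e \ (star s * s)) := by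
        rw [mul_star_mul_self']
    _ = 0 := by
        rw [mul_assoc, mul_sdiff_self_right he (isIdempotentElem_star_mul_self s), mul_zero]

theorem star_mul_mul_sdiff_eq_zero (hb : muRel (star s * u * (star s * u)) (star s * u)) :
    star s * (u * ((star u * u) \ (star s * s))) = 0 := by
  have hd := star_mul_self_eq_mul_star_self_of_muRel hb
  calc star s * (u * ((star u * u) \ (star s * s)))
      = star s * u * (star (star s * u) * (star s * u)) * ((star u * u) \ (star s * s)) := by
        rw [← mul_assoc (star s * u), mul_star_mul_self, mul_assoc]
    _ = star s * u * (star s * u) * star u * (s * ((star u * u) \ (star s * s))) := by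
        rw [hd, star_star_mul]; simp only [mul_assoc]
    _ = 0 := by
        rw [mul_sdiff_star_mul_self_eq_zero s (isIdempotentElem_star_mul_self u), mul_zero]

theorem exists_compat_muRel (ha : muRel (s * star u * (s * star u)) (s * star u))
    (hb : muRel (star s * u * (star s * u)) (star s * u)) : ∃ u', Compat s u' ∧ muRel u u' := by
  have hss := isIdempotentElem_star_mul_self s
  have huu := isIdempotentElem_star_mul_self u
  set F := (star u * u) \ (star s * s)
  have hF : IsIdempotentElem F := sdiff_idem _ _ huu hss
  have h₁ : Compat s (u * F) := by
    refine compat_of_mul_star_eq_zero ?_ (star_mul_mul_sdiff_eq_zero hb)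
    rw [star_mul, hF.star_eq_self, ← mul_assoc, mul_sdiff_star_mul_self_eq_zero s huu, zero_mul]
  have h₂ : Compat s (s * (star u * u)) := (compat_of_natLe (natLe_mul_right s huu)).symm
  have h₃ : Compat (u * F) (s * (star u * u)) := by
    refine compat_of_mul_star_eq_zero ?_ ?_
    · rw [star_mul, huu.star_eq_self, ← mul_assoc (u * F), mul_assoc u F,
        mul_comm_of_isIdempotentElem hF huu, ← mul_assoc u (star u * u), mul_star_mul_self']
      refine mul_star_eq_zero_of_mul_star_mul_self ?_
      rw [mul_assoc, sdiff_mul _ _ huu hss, mul_zero]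
    · rw [← mul_assoc, ← star_star_mul s (u * F), star_mul_mul_sdiff_eq_zero hb, star_zero,
        zero_mul]
  refine ⟨u * F ⊔ s * (star u * u), compat_sup h₃ h₁ h₂, ?_⟩
  have hu : u * F ⊔ u * (star s * s) = u := by
    have := mul_sdiff_sup_mul u huu hss
    rwa [← mul_assoc, mul_star_mul_self'] at this
  have hc : Compat (u * F) (u * (star s * s)) :=
    (compat_refl u).mono (natLe_mul_right u hF) (natLe_mul_right u hss)
  have := muRel_sup (muRel_refl _) (muRel_mul_star_mul_self_swap ha) hc h₃
  rwa [hu] at this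

end CompatRepresentative

section Quotient

variable {T : Type*} [BooleanInverseSemigroup0 T]

open BooleanInverseSemigroup0 (le_sup_left le_sup_right sup_le mul_sup sup_mul sdiff_idem
  sdiff_le sdiff_mul sdiff_sup)

instance : Mul (Quot (muRel (S := T))) :=
  ⟨Quot.map₂ (· * ·) (fun a _ _ h => h.mul_left a) (fun _ _ b h => h.mul_right b)⟩

instance : Star (Quot (muRel (S := T))) := ⟨Quot.map star fun _ _ => muRel_star⟩

instance : Zero (Quot (muRel (S := T))) := ⟨Quot.mk _ 0⟩

instance : Max (Quot (muRel (S := T))) :=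
  ⟨Quot.map₂ skewAdd (fun a _ _ h => muRel_skewAdd (muRel_refl a) h)
    (fun _ _ b h => muRel_skewAdd h (muRel_refl b))⟩

-- On classes of idempotents `e`, `f` this is the class of `e \ f`; passing through the range
-- idempotents makes it well defined on all classes.
instance : SDiff (Quot (muRel (S := T))) :=
  ⟨Quot.map₂ (fun a b => (a * star a) \ (b * star b))
    (fun a _ _ h => by rw [h.mul_star_self_eq]; exact muRel_refl _)
    (fun _ _ b h => by rw [h.mul_star_self_eq]; exact muRel_refl _)⟩

instance : Semigroup (Quot (muRel (S := T))) where
  mul_assoc := by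
    rintro ⟨a⟩ ⟨b⟩ ⟨c⟩
    exact congrArg (Quot.mk _) (mul_assoc a b c)

theorem mk_eq_mk_iff {a b : T} : Quot.mk muRel a = Quot.mk muRel b ↔ muRel a b :=
  Quot.eq.trans muRel_equivalence.eqvGen_iff

theorem exists_isIdempotentElem_mk_eq {x : Quot (muRel (S := T))} (hx : IsIdempotentElem x) :
    ∃ e, IsIdempotentElem e ∧ Quot.mk _ e = x := by
  induction x using Quot.ind with
  | mk a =>
    exact ⟨a * star a, isIdempotentElem_mul_star_self a,
      (mk_eq_mk_iff.2 (muRel_mul_star_self_of_mul_self (mk_eq_mk_iff.1 hx))).symm⟩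

theorem quot_mul_comm_of_isIdempotentElem (x y : Quot (muRel (S := T))) (hx : IsIdempotentElem x)
    (hy : IsIdempotentElem y) : x * y = y * x := by
  obtain ⟨e, he, rfl⟩ := exists_isIdempotentElem_mk_eq hx
  obtain ⟨f, hf, rfl⟩ := exists_isIdempotentElem_mk_eq hy
  exact congrArg (Quot.mk _) (mul_comm_of_isIdempotentElem he hf)

instance : InverseSemigroup0 (Quot (muRel (S := T))) where
  zero_mul := by
    rintro ⟨a⟩
    exact congrArg (Quot.mk _) (zero_mul a)
  mul_zero := by
    rintro ⟨a⟩
    exact congrArg (Quot.mk _) (mul_zero a)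
  mul_star_mul_self := by
    rintro ⟨a⟩
    exact congrArg (Quot.mk _) (mul_star_mul_self a)
  star_mul_self_star := by
    rintro ⟨a⟩
    exact congrArg (Quot.mk _) (star_mul_self_star a)
  star_unique := by
    rintro ⟨s⟩ y h₁ h₂
    exact inverse_unique_of_idempotents_commute quot_mul_comm_of_isIdempotentElem h₁ h₂
      (congrArg (Quot.mk _) (mul_star_mul_self s)) (congrArg (Quot.mk _) (star_mul_self_star s))

theorem mk_natLe_mk {a b : T} (h : NatLe a b) :
    NatLe (Quot.mk muRel a) (Quot.mk muRel b) :=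
  congrArg (Quot.mk _) h

theorem mk_sup_mk {a b : T} (h : Compat a b) :
    Quot.mk muRel (a ⊔ b) = Quot.mk muRel a ⊔ Quot.mk muRel b :=
  congrArg (Quot.mk _) h.skewAdd_eq.symm

theorem mk_sdiff_mk {e f : T} (he : IsIdempotentElem e) (hf : IsIdempotentElem f) :
    Quot.mk muRel e \ Quot.mk muRel f = Quot.mk muRel (e \ f) := by
  show Quot.mk muRel ((e * star e) \ (f * star f)) = _
  rw [he.star_eq_self, hf.star_eq_self, he.eq, hf.eq]

theorem exists_natLe_mk_eq {x : Quot (muRel (S := T))} {w : T} (h : NatLe x (Quot.mk _ w)) :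
    ∃ s, NatLe s w ∧ Quot.mk _ s = x := by
  induction x using Quot.ind with
  | mk a =>
    refine ⟨w * star a * a, ?_, h.symm⟩
    rw [mul_assoc]
    exact natLe_mul_right w (isIdempotentElem_star_mul_self a)

theorem exists_compat_mk_eq {s : T} {y : Quot (muRel (S := T))} (h : Compat (Quot.mk _ s) y) :
    ∃ u, Compat s u ∧ Quot.mk _ u = y := by
  induction y using Quot.ind with
  | mk u =>
    obtain ⟨u', hsu', hu⟩ := exists_compat_muRel (mk_eq_mk_iff.1 h.1) (mk_eq_mk_iff.1 h.2)
    exact ⟨u', hsu', (mk_eq_mk_iff.2 hu).symm⟩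

instance : BooleanInverseSemigroup0 (Quot (muRel (S := T))) where
  le_sup_left := by
    rintro ⟨s⟩ y h
    obtain ⟨u, hsu, rfl⟩ := exists_compat_mk_eq h
    rw [← mk_sup_mk hsu]
    exact mk_natLe_mk (le_sup_left s u hsu)
  le_sup_right := by
    rintro ⟨s⟩ y h
    obtain ⟨u, hsu, rfl⟩ := exists_compat_mk_eq h
    rw [← mk_sup_mk hsu]
    exact mk_natLe_mk (le_sup_right s u hsu)
  sup_le := by
    rintro x y ⟨w⟩ - hx hy
    obtain ⟨s, hs, rfl⟩ := exists_natLe_mk_eq hx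
    obtain ⟨u, hu, rfl⟩ := exists_natLe_mk_eq hy
    have hsu : Compat s u := (compat_refl w).mono hs hu
    rw [← mk_sup_mk hsu]
    exact mk_natLe_mk (sup_le s u w hsu hs hu)
  mul_sup := by
    rintro ⟨a⟩ ⟨s⟩ y h
    obtain ⟨u, hsu, rfl⟩ := exists_compat_mk_eq h
    rw [← mk_sup_mk hsu]
    exact (congrArg (Quot.mk _) (mul_sup a s u hsu)).trans (mk_sup_mk (hsu.mul_left a))
  sup_mul := by
    rintro ⟨a⟩ ⟨s⟩ y h
    obtain ⟨u, hsu, rfl⟩ := exists_compat_mk_eq h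
    rw [← mk_sup_mk hsu]
    exact (congrArg (Quot.mk _) (sup_mul a s u hsu)).trans
      (mk_sup_mk (hsu.mul_right a))
  sdiff_idem := by
    intro x y hx hy
    obtain ⟨e, he, rfl⟩ := exists_isIdempotentElem_mk_eq hx
    obtain ⟨f, hf, rfl⟩ := exists_isIdempotentElem_mk_eq hy
    rw [mk_sdiff_mk he hf]
    exact congrArg (Quot.mk _) (sdiff_idem e f he hf)
  sdiff_le := by
    intro x y hx hy
    obtain ⟨e, he, rfl⟩ := exists_isIdempotentElem_mk_eq hx
    obtain ⟨f, hf, rfl⟩ := exists_isIdempotentElem_mk_eq hy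
    rw [mk_sdiff_mk he hf]
    exact mk_natLe_mk (sdiff_le e f he hf)
  sdiff_mul := by
    intro x y hx hy
    obtain ⟨e, he, rfl⟩ := exists_isIdempotentElem_mk_eq hx
    obtain ⟨f, hf, rfl⟩ := exists_isIdempotentElem_mk_eq hy
    rw [mk_sdiff_mk he hf]
    exact congrArg (Quot.mk _) (sdiff_mul e f he hf)
  sdiff_sup := by
    intro x y hx hy
    obtain ⟨e, he, rfl⟩ := exists_isIdempotentElem_mk_eq hx
    obtain ⟨f, hf, rfl⟩ := exists_isIdempotentElem_mk_eq hy
    rw [mk_sdiff_mk he hf]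
    exact (mk_sup_mk (compat_of_isIdempotentElem (sdiff_idem e f he hf)
      (isIdempotentElem_mul he hf))).symm.trans (congrArg (Quot.mk _) (sdiff_sup e f he hf))

end Quotient

end InverseSemigroup0

/-- The maximal idempotent-separating congruence `μ` of a Boolean inverse semigroup is
compatible with skew difference and skew addition (and with joins of compatible pairs);
consequently the quotient `S/μ` is a Boolean inverse semigroup and the natural
projection `S → S/μ` is additive. -/
theorem stmt3 (S : Type*) [BooleanInverseSemigroup0 S] :
    (∀ s₁ s₂ t₁ t₂ : S, muRel s₁ s₂ → muRel t₁ t₂ →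
        muRel (skewDiff s₁ t₁) (skewDiff s₂ t₂)) ∧
    (∀ s₁ s₂ t₁ t₂ : S, muRel s₁ s₂ → muRel t₁ t₂ →
        muRel (skewAdd s₁ t₁) (skewAdd s₂ t₂)) ∧
    (∀ s₁ s₂ t₁ t₂ : S, muRel s₁ s₂ → muRel t₁ t₂ → Compat s₁ t₁ → Compat s₂ t₂ →
        muRel (s₁ ⊔ t₁) (s₂ ⊔ t₂)) ∧
    ∃ _ : BooleanInverseSemigroup0 (Quot (muRel (S := S))),
      IsAdditiveProj (Quot.mk (muRel (S := S))) :=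
  ⟨fun _ _ _ _ => InverseSemigroup0.muRel_skewDiff,
    fun _ _ _ _ => InverseSemigroup0.muRel_skewAdd,
    fun _ _ _ _ => InverseSemigroup0.muRel_sup,
    inferInstance, rfl, fun _ _ => rfl, fun _ _ => InverseSemigroup0.mk_sup_mk⟩
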